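/- arXiv:2506.06873 — 4 statements merged into one kernel-verified Lean document; each statement's English description precedes it below -/
import Mathlib

section
/- For every y < 0 and every ε ∈ [0,1], the inequality e^y ≤ 1 + y + |y|^(1+ε)/(1+ε) holds. -/
/-! Put `s = -y > 0` and `p = 1 + ε ∈ [1, 2]`. The function `1 - s + s ^ p / p - exp (-s)` vanishes
at `0` and has derivative `s ^ (p - 1) - 1 + exp (-s)`, which is nonnegative: for `s ≥ 1` because
`s ^ (p - 1) ≥ 1`, and for `s < 1` because `s ^ (p - 1) ≥ s ≥ 1 - exp (-s)`. -/

open Real Set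

lemma one_le_rpow_add_exp_neg {x ε : ℝ} (hx : 0 < x) (hε0 : 0 ≤ ε) (hε1 : ε ≤ 1) :
    1 ≤ x ^ ε + exp (-x) := by
  rcases le_or_gt 1 x with h | h
  · have : 1 ≤ x ^ ε := one_le_rpow h hε0
    linarith [exp_pos (-x)]
  · have hxε : x ≤ x ^ ε := by
      simpa using rpow_le_rpow_of_exponent_ge hx h.le hε1
    linarith [add_one_le_exp (-x)]

lemma hasDerivAt_one_sub_add_rpow_div_sub_exp_neg {p x : ℝ} (hp : p ≠ 0) (hx : 0 < x) :
    HasDerivAt (fun s => 1 - s + s ^ p / p - exp (-s)) (x ^ (p - 1) - 1 + exp (-x)) x := by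
  have hpow : HasDerivAt (fun s => s ^ p / p) (x ^ (p - 1)) x := by
    refine ((hasDerivAt_rpow_const (p := p) (Or.inl hx.ne')).div_const p).congr_deriv ?_
    field_simp
  have hexp : HasDerivAt (fun s => exp (-s)) (-exp (-x)) x := by
    simpa using (hasDerivAt_neg x).exp
  refine ((((hasDerivAt_id' x).const_sub 1).add hpow).sub hexp).congr_deriv ?_
  ring

lemma exp_neg_le_one_sub_add_rpow_div {p s : ℝ} (hp1 : 1 ≤ p) (hp2 : p ≤ 2) (hs : 0 ≤ s) :
    exp (-s) ≤ 1 - s + s ^ p / p := by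
  set f : ℝ → ℝ := fun s => 1 - s + s ^ p / p - exp (-s)
  have hcont : ContinuousOn f (Ici 0) :=
    ((continuous_const.sub continuous_id).add
      ((continuous_rpow_const (by linarith)).div_const p)).sub
      (continuous_exp.comp continuous_neg) |>.continuousOn
  have hmono : MonotoneOn f (Ici 0) := by
    refine monotoneOn_of_hasDerivWithinAt_nonneg (f' := fun x => x ^ (p - 1) - 1 + exp (-x))
      (convex_Ici 0) hcont (fun x hx => ?_) (fun x hx => ?_)
    · rw [interior_Ici] at hx
      exact (hasDerivAt_one_sub_add_rpow_div_sub_exp_neg (by linarith) hx).hasDerivWithinAt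
    · rw [interior_Ici] at hx
      linarith [one_le_rpow_add_exp_neg hx (sub_nonneg.2 hp1) (by linarith : p - 1 ≤ 1)]
  have hf0 : f 0 = 0 := by simp [f, zero_rpow (by linarith : p ≠ 0)]
  have hfs : f 0 ≤ f s := hmono self_mem_Ici hs hs
  simp only [hf0, f] at hfs
  linarith

theorem stmt_3 (y ε : ℝ) (hy : y < 0) (hε0 : 0 ≤ ε) (hε1 : ε ≤ 1) :
    Real.exp y ≤ 1 + y + |y| ^ (1 + ε) / (1 + ε) := by
  have h := exp_neg_le_one_sub_add_rpow_div (p := 1 + ε) (s := -y)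
    (by linarith) (by linarith) (by linarith)
  rw [neg_neg] at h
  rw [abs_of_neg hy]
  linarith
end

section
/- Let Z be a positive random variable with E[Z^(1+ε)] < ∞ for some ε ∈ [0,1], and let λ < 0. Then E[Z] ≥ (1/λ) log E[e^(λ Z)] ≥ E[Z] − (|λ|^ε/(1+ε)) E[Z^(1+ε)]. -/
/-!
Both bounds concern the cumulant generating function `Λ(λ) = log E[exp(λ Z)]`. Jensen's
inequality gives `λ E[Z] ≤ Λ(λ)`. Conversely `log x ≤ x - 1` together with the pointwise bound
`exp(-x) ≤ 1 - x + x^(1+ε)/(1+ε)` for `x ≥ 0` (compare derivatives: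
`1 - exp(-x) ≤ min(1, x) ≤ x^ε`) gives
`Λ(λ) ≤ λ E[Z] + |λ|^(1+ε) E[Z^(1+ε)]/(1+ε)`. Dividing by `λ < 0` reverses both inequalities.
-/

open MeasureTheory ProbabilityTheory Real Set

namespace Real

lemma one_sub_exp_neg_le_rpow {ε y : ℝ} (hε0 : 0 ≤ ε) (hε1 : ε ≤ 1) (hy : 0 ≤ y) :
    1 - exp (-y) ≤ y ^ ε := by
  rcases le_total 1 y with h | h
  · linarith [one_le_rpow h hε0, exp_pos (-y)]
  · have : y ≤ y ^ ε := by simpa using rpow_le_rpow_of_exponent_ge' hy h hε0 hε1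
    linarith [add_one_le_exp (-y)]

lemma exp_neg_sub_one_add_le_rpow {ε x : ℝ} (hε0 : 0 ≤ ε) (hε1 : ε ≤ 1) (hx : 0 ≤ x) :
    exp (-x) - 1 + x ≤ x ^ (1 + ε) / (1 + ε) := by
  let g : ℝ → ℝ := fun y ↦ y ^ (1 + ε) / (1 + ε) - (exp (-y) - 1 + y)
  have hg : ∀ y, HasDerivAt g (y ^ ε + exp (-y) - 1) y := by
    intro y
    have hpow := (hasDerivAt_rpow_const (x := y) (p := 1 + ε) (Or.inr (by linarith))).div_const
      (1 + ε)
    rw [add_sub_cancel_left, mul_div_cancel_left₀ _ (by linarith)] at hpow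
    exact (hpow.sub (((hasDerivAt_neg y).exp.sub_const 1).add (hasDerivAt_id y))).congr_deriv
      (by ring)
  have hmono : MonotoneOn g (Ici 0) := by
    refine monotoneOn_of_hasDerivWithinAt_nonneg (convex_Ici 0)
      (fun y _ ↦ (hg y).continuousAt.continuousWithinAt) (fun y _ ↦ (hg y).hasDerivWithinAt)
      fun y hy ↦ ?_
    rw [interior_Ici] at hy
    linarith [one_sub_exp_neg_le_rpow hε0 hε1 (le_of_lt hy)]
  have := hmono self_mem_Ici hx hx
  simp only [g, zero_rpow (by linarith : 1 + ε ≠ 0), neg_zero, exp_zero, zero_div, sub_self,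
    add_zero] at this
  linarith

lemma exp_le_one_add_add_rpow_abs {ε y : ℝ} (hε0 : 0 ≤ ε) (hε1 : ε ≤ 1) (hy : y ≤ 0) :
    exp y ≤ 1 + y + |y| ^ (1 + ε) / (1 + ε) := by
  have := exp_neg_sub_one_add_le_rpow hε0 hε1 (neg_nonneg.mpr hy)
  rw [neg_neg, ← abs_of_nonpos hy] at this
  linarith [abs_of_nonpos hy]

end Real

namespace ProbabilityTheory

variable {Ω : Type*} [MeasurableSpace Ω] {μ : Measure Ω} {X : Ω → ℝ} {t : ℝ}

lemma integrable_exp_mul_of_nonpos_of_nonneg [IsFiniteMeasure μ] (ht : t ≤ 0)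
    (hX : AEMeasurable X μ) (hX0 : ∀ᵐ ω ∂μ, 0 ≤ X ω) :
    Integrable (fun ω ↦ exp (t * X ω)) μ := by
  refine .of_mem_Icc 0 1 (measurable_exp.comp_aemeasurable (hX.const_mul t)) ?_
  filter_upwards [hX0] with ω hω
  exact ⟨(exp_pos _).le, exp_le_one_iff.mpr (mul_nonpos_of_nonpos_of_nonneg ht hω)⟩

variable [IsProbabilityMeasure μ]

lemma exp_mul_integral_le_mgf (hX : Integrable X μ)
    (hexp : Integrable (fun ω ↦ exp (t * X ω)) μ) : exp (t * μ[X]) ≤ mgf X μ t := by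
  have := convexOn_exp.map_integral_le continuousOn_exp isClosed_univ
    (.of_forall fun _ ↦ mem_univ _) (hX.const_mul t) hexp
  rwa [integral_const_mul] at this

lemma mul_integral_le_cgf (hX : Integrable X μ)
    (hexp : Integrable (fun ω ↦ exp (t * X ω)) μ) : t * μ[X] ≤ cgf X μ t :=
  (le_log_iff_exp_le (mgf_pos hexp)).mpr (exp_mul_integral_le_mgf hX hexp)

lemma mgf_le_one_add_mul_integral_add {ε : ℝ} (hε0 : 0 ≤ ε) (hε1 : ε ≤ 1) (ht : t ≤ 0)
    (hX0 : ∀ᵐ ω ∂μ, 0 ≤ X ω) (hX : Integrable X μ)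
    (hXε : Integrable (fun ω ↦ X ω ^ (1 + ε)) μ) :
    mgf X μ t ≤ 1 + t * μ[X] + |t| ^ (1 + ε) * μ[fun ω ↦ X ω ^ (1 + ε)] / (1 + ε) := by
  have hlin : Integrable (fun ω ↦ 1 + t * X ω) μ := (integrable_const 1).add (hX.const_mul t)
  have hpow : Integrable (fun ω ↦ |t| ^ (1 + ε) * X ω ^ (1 + ε) / (1 + ε)) μ :=
    (hXε.const_mul _).div_const _
  calc mgf X μ t
      ≤ ∫ ω, 1 + t * X ω + |t| ^ (1 + ε) * X ω ^ (1 + ε) / (1 + ε) ∂μ := by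
        refine integral_mono_ae (integrable_exp_mul_of_nonpos_of_nonneg ht hX.1.aemeasurable hX0)
          (hlin.add hpow) ?_
        filter_upwards [hX0] with ω hω
        have := exp_le_one_add_add_rpow_abs hε0 hε1 (mul_nonpos_of_nonpos_of_nonneg ht hω)
        rwa [abs_mul, abs_of_nonneg hω, mul_rpow (abs_nonneg t) hω] at this
    _ = _ := by
        rw [integral_add hlin hpow, integral_add (integrable_const 1) (hX.const_mul t),
          integral_const, probReal_univ, one_smul, integral_const_mul, integral_div,
          integral_const_mul]

lemma cgf_le_mul_integral_add {ε : ℝ} (hε0 : 0 ≤ ε) (hε1 : ε ≤ 1) (ht : t ≤ 0)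
    (hX0 : ∀ᵐ ω ∂μ, 0 ≤ X ω) (hX : Integrable X μ)
    (hXε : Integrable (fun ω ↦ X ω ^ (1 + ε)) μ) :
    cgf X μ t ≤ t * μ[X] + |t| ^ (1 + ε) * μ[fun ω ↦ X ω ^ (1 + ε)] / (1 + ε) := by
  have hmgf := mgf_pos (integrable_exp_mul_of_nonpos_of_nonneg ht hX.1.aemeasurable hX0)
  exact (log_le_sub_one_of_pos hmgf).trans
    (by linarith [mgf_le_one_add_mul_integral_add hε0 hε1 ht hX0 hX hXε])

end ProbabilityTheory

open MeasureTheory in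
theorem stmt_5 {Ω : Type*} [MeasurableSpace Ω] (μ : Measure Ω) [IsProbabilityMeasure μ]
    (Z : Ω → ℝ) (ε l : ℝ) (hε0 : 0 ≤ ε) (hε1 : ε ≤ 1) (hl : l < 0)
    (hpos : ∀ᵐ ω ∂μ, 0 < Z ω)
    (hint : Integrable Z μ)
    (hint' : Integrable (fun ω => Z ω ^ (1 + ε)) μ) :
    (1 / l) * Real.log (∫ ω, Real.exp (l * Z ω) ∂μ) ≤ ∫ ω, Z ω ∂μ ∧
    (∫ ω, Z ω ∂μ) - (|l| ^ ε / (1 + ε)) * ∫ ω, Z ω ^ (1 + ε) ∂μ ≤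
      (1 / l) * Real.log (∫ ω, Real.exp (l * Z ω) ∂μ) := by
  have hZ0 : ∀ᵐ ω ∂μ, 0 ≤ Z ω := hpos.mono fun _ ↦ le_of_lt
  change 1 / l * cgf Z μ l ≤ μ[Z] ∧ μ[Z] - |l| ^ ε / (1 + ε) * μ[fun ω ↦ Z ω ^ (1 + ε)] ≤
    1 / l * cgf Z μ l
  rw [one_div_mul_eq_div, div_le_iff_of_neg' hl, le_div_iff_of_neg hl]
  refine ⟨mul_integral_le_cgf hint
    (integrable_exp_mul_of_nonpos_of_nonneg hl.le hint.1.aemeasurable hZ0), ?_⟩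
  have habs : |l| ^ (1 + ε) = -l * |l| ^ ε := by
    rw [rpow_add (abs_pos.mpr hl.ne), rpow_one, abs_of_neg hl]
  refine (cgf_le_mul_integral_add hε0 hε1 hl.le hZ0 hint hint').trans_eq ?_
  rw [habs]
  ring
end

section
/- Let Z₁,…,Z_n be i.i.d. copies of a positive random variable Z, and λ < 0. Then E[(1/λ) log((1/n)Σᵢ e^{λZᵢ})] ≤ E[Z] − ((n−1)/(2n|λ|)) Var(e^{λZ}). (Lower bound on the bias of the LSE estimator relative to the true mean.) -/
/-!
Write `Xᵢ = exp (l Zᵢ) ∈ (0, 1]`. Jensen's inequality for `x ↦ log x + x ^ 2 / 2`, which is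
concave on `(0, 1]`, gives `log (mean Xᵢ) ≥ l · mean Zᵢ + (mean Xᵢ² - (mean Xᵢ)²) / 2`.
Divide by `l < 0` and integrate: the expected empirical variance of an i.i.d. sample is
`(n - 1) / n · Var X`, which yields the correction term.
-/

open MeasureTheory ProbabilityTheory Real BigOperators
open Set (Ioc)

lemma concaveOn_log_add_sq_div_two : ConcaveOn ℝ (Ioc 0 1) (fun x ↦ log x + x ^ 2 / 2) := by
  have hderiv (x : ℝ) (hx : 0 < x) : HasDerivAt (fun x ↦ log x + x ^ 2 / 2) (x⁻¹ + x) x := by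
    have hsq : HasDerivAt (fun x : ℝ ↦ x ^ 2 / 2) x x := by
      simpa using (hasDerivAt_pow 2 x).div_const 2
    exact (hasDerivAt_log hx.ne').add hsq
  refine AntitoneOn.concaveOn_of_deriv (convex_Ioc 0 1) ?_ ?_ ?_
  · exact (continuousOn_log.mono fun x hx ↦ hx.1.ne').add (by fun_prop)
  · rw [interior_Ioc]
    exact fun x hx ↦ (hderiv x hx.1).differentiableAt.differentiableWithinAt
  · rw [interior_Ioc]
    rintro x ⟨hx0, hx1⟩ y ⟨hy0, hy1⟩ hxy
    rw [(hderiv x hx0).deriv, (hderiv y hy0).deriv, ← sub_nonneg,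
      show x⁻¹ + x - (y⁻¹ + y) = (y - x) * (1 - x * y) / (x * y) by field_simp; ring]
    have : x * y ≤ 1 := mul_le_one₀ hx1.le hy0.le hy1.le
    have : 0 < x * y := mul_pos hx0 hy0
    have : 0 ≤ y - x := sub_nonneg.2 hxy
    positivity

lemma expect_log_add_le_log_expect {ι : Type*} [Fintype ι] [Nonempty ι] {x : ι → ℝ}
    (hx : ∀ i, x i ∈ Ioc 0 1) :
    𝔼 i, log (x i) + (𝔼 i, x i ^ 2 - (𝔼 i, x i) ^ 2) / 2 ≤ log (𝔼 i, x i) := by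
  have hcard : (0 : ℝ) < Fintype.card ι := by exact_mod_cast Fintype.card_pos
  have hjensen := concaveOn_log_add_sq_div_two.le_map_sum (t := Finset.univ)
    (w := fun _ ↦ (Fintype.card ι : ℝ)⁻¹) (fun _ _ ↦ by positivity)
    (by simp [hcard.ne']) (fun i _ ↦ hx i)
  simp only [smul_eq_mul, ← Finset.mul_sum, Finset.sum_add_distrib, ← Finset.sum_div,
    mul_add] at hjensen
  simp only [Fintype.expect_eq_sum_div_card, div_eq_inv_mul] at hjensen ⊢
  linarith

lemma exp_mul_mem_Ioc {l z : ℝ} (hl : l ≤ 0) (hz : 0 ≤ z) : exp (l * z) ∈ Ioc 0 1 :=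
  ⟨exp_pos _, exp_le_one_iff.2 (mul_nonpos_of_nonpos_of_nonneg hl hz)⟩

section

variable {ι : Type*} [Fintype ι] [Nonempty ι] {z : ι → ℝ} {l : ℝ}

lemma log_expect_exp_div_nonneg (hz : ∀ i, 0 ≤ z i) (hl : l ≤ 0) :
    0 ≤ log (𝔼 i, exp (l * z i)) / l :=
  div_nonneg_of_nonpos (log_nonpos (Finset.expect_nonneg fun _ _ ↦ (exp_pos _).le)
    (Finset.expect_le Finset.univ_nonempty fun i _ ↦ (exp_mul_mem_Ioc hl (hz i)).2)) hl

lemma log_expect_exp_div_le (hz : ∀ i, 0 ≤ z i) (hl : l < 0) :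
    log (𝔼 i, exp (l * z i)) / l ≤
      𝔼 i, z i + (𝔼 i, exp (l * z i) ^ 2 - (𝔼 i, exp (l * z i)) ^ 2) / (2 * l) := by
  have h := expect_log_add_le_log_expect fun i ↦ exp_mul_mem_Ioc hl.le (hz i)
  simp only [log_exp, ← Finset.mul_expect] at h
  rw [div_le_iff_of_neg hl]
  refine le_of_eq_of_le ?_ h
  have := hl.ne
  field_simp

end

section

variable {Ω ι : Type*} [MeasurableSpace Ω] {μ : Measure Ω} [Fintype ι] {X : ι → Ω → ℝ}

lemma integral_expect (hX : ∀ i, Integrable (X i) μ) :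
    ∫ ω, 𝔼 i, X i ω ∂μ = 𝔼 i, ∫ ω, X i ω ∂μ := by
  simp only [Fintype.expect_eq_sum_div_card, integral_div, integral_finsetSum _ fun i _ ↦ hX i]

lemma memLp_expect {p : ENNReal} (hX : ∀ i, MemLp (X i) p μ) :
    MemLp (fun ω ↦ 𝔼 i, X i ω) p μ := by
  simp only [Fintype.expect_eq_sum_div_card, div_eq_inv_mul]
  refine MemLp.const_mul ?_ _
  exact memLp_finsetSum _ fun i _ ↦ hX i

lemma integrable_expect (hX : ∀ i, Integrable (X i) μ) :
    Integrable (fun ω ↦ 𝔼 i, X i ω) μ := by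
  simp only [Fintype.expect_eq_sum_div_card]
  exact (integrable_finsetSum _ fun i _ ↦ hX i).div_const _

lemma variance_expect (hX : ∀ i, MemLp (X i) 2 μ)
    (hindep : Pairwise fun i j ↦ X i ⟂ᵢ[μ] X j) :
    Var[fun ω ↦ 𝔼 i, X i ω; μ] = (𝔼 i, Var[X i; μ]) / Fintype.card ι := by
  have hsum : Var[fun ω ↦ ∑ i, X i ω; μ] = ∑ i, Var[X i; μ] := by
    rw [← IndepFun.variance_sum (fun i _ ↦ hX i) fun i _ j _ hij ↦ hindep hij]
    congr with ω
    simp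
  simp only [Fintype.expect_eq_sum_div_card, div_eq_inv_mul, variance_const_mul, hsum]
  ring

lemma memLp_exp_mul_of_nonneg [IsFiniteMeasure μ] {Y : Ω → ℝ} {l : ℝ} (hl : l ≤ 0)
    (hY : AEMeasurable Y μ) (hpos : 0 ≤ᵐ[μ] Y) :
    MemLp (fun ω ↦ exp (l * Y ω)) 2 μ := by
  refine MemLp.of_bound (by fun_prop) 1 ?_
  filter_upwards [hpos] with ω hω
  rw [norm_of_nonneg (exp_pos _).le]
  exact (exp_mul_mem_Ioc hl hω).2

variable [IsProbabilityMeasure μ] [Nonempty ι] {Y : Ω → ℝ}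

lemma integral_expect_sq_sub_sq_expect (hY : MemLp Y 2 μ)
    (hindep : Pairwise fun i j ↦ X i ⟂ᵢ[μ] X j) (hid : ∀ i, IdentDistrib (X i) Y μ μ) :
    ∫ ω, (𝔼 i, X i ω ^ 2 - (𝔼 i, X i ω) ^ 2) ∂μ =
      ((Fintype.card ι : ℝ) - 1) / Fintype.card ι * Var[Y; μ] := by
  have hX i : MemLp (X i) 2 μ := (hid i).memLp_iff.2 hY
  have hmean : MemLp (fun ω ↦ 𝔼 i, X i ω) 2 μ := memLp_expect hX
  have hmoment2 : ∫ ω, 𝔼 i, X i ω ^ 2 ∂μ = ∫ ω, Y ω ^ 2 ∂μ := by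
    simp [integral_expect fun i ↦ (hX i).integrable_sq, fun i ↦ (hid i).sq.integral_eq]
  have hmoment1 : ∫ ω, 𝔼 i, X i ω ∂μ = ∫ ω, Y ω ∂μ := by
    simp [integral_expect fun i ↦ (hX i).integrable one_le_two, fun i ↦ (hid i).integral_eq]
  have hvar : Var[fun ω ↦ 𝔼 i, X i ω; μ] = Var[Y; μ] / Fintype.card ι := by
    simp [variance_expect hX hindep, fun i ↦ (hid i).variance_eq]
  have hvar_mean := variance_eq_sub hmean
  have hvar_Y := variance_eq_sub hY
  simp only [Pi.pow_apply, hvar, hmoment1] at hvar_mean hvar_Y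
  have hcard : (Fintype.card ι : ℝ) ≠ 0 := by positivity
  rw [integral_sub (integrable_expect fun i ↦ (hX i).integrable_sq) hmean.integrable_sq,
    hmoment2, sub_div, div_self hcard]
  linear_combination hvar_mean - hvar_Y

lemma integral_log_expect_exp_div_le {Z : ι → Ω → ℝ} {l : ℝ} (hl : l < 0)
    (hindep : Pairwise fun i j ↦ Z i ⟂ᵢ[μ] Z j) (hid : ∀ i, IdentDistrib (Z i) Y μ μ)
    (hpos : 0 ≤ᵐ[μ] Y) (hint : Integrable Y μ) :
    ∫ ω, log (𝔼 i, exp (l * Z i ω)) / l ∂μ ≤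
      ∫ ω, Y ω ∂μ + ((Fintype.card ι : ℝ) - 1) / Fintype.card ι *
        Var[fun ω ↦ exp (l * Y ω); μ] / (2 * l) := by
  have hexp : Measurable fun x ↦ exp (l * x) := by fun_prop
  have hZpos : ∀ᵐ ω ∂μ, ∀ i, 0 ≤ Z i ω :=
    ae_all_iff.2 fun i ↦ (hid i).symm.ae_snd measurableSet_Ici hpos
  have hZ i : Integrable (Z i) μ := (hid i).integrable_iff.2 hint
  have hidX i : IdentDistrib (fun ω ↦ exp (l * Z i ω)) (fun ω ↦ exp (l * Y ω)) μ μ :=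
    (hid i).comp hexp
  have hY := memLp_exp_mul_of_nonneg hl.le hint.aemeasurable hpos
  have hX i : MemLp (fun ω ↦ exp (l * Z i ω)) 2 μ := (hidX i).memLp_iff.2 hY
  have hvar := integral_expect_sq_sub_sq_expect (X := fun i ω ↦ exp (l * Z i ω)) hY
    (fun i j hij ↦ (hindep hij).comp hexp hexp) hidX
  have hvar_int : Integrable
      (fun ω ↦ (𝔼 i, exp (l * Z i ω) ^ 2 - (𝔼 i, exp (l * Z i ω)) ^ 2) / (2 * l)) μ :=
    ((integrable_expect fun i ↦ (hX i).integrable_sq).sub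
      (memLp_expect hX).integrable_sq).div_const _
  have hbound_int : Integrable (fun ω ↦ 𝔼 i, Z i ω +
      (𝔼 i, exp (l * Z i ω) ^ 2 - (𝔼 i, exp (l * Z i ω)) ^ 2) / (2 * l)) μ :=
    (integrable_expect hZ).add hvar_int
  -- The integrand is nonnegative, so `integral_mono_of_nonneg` spares us its integrability.
  refine (integral_mono_of_nonneg ?_ hbound_int ?_).trans_eq ?_
  · filter_upwards [hZpos] with ω hω using log_expect_exp_div_nonneg hω hl.le
  · filter_upwards [hZpos] with ω hω using log_expect_exp_div_le hω hl
  · rw [integral_add (integrable_expect hZ) hvar_int, integral_div, hvar, integral_expect hZ]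
    simp [fun i ↦ (hid i).integral_eq]

end

open MeasureTheory ProbabilityTheory in
theorem stmt_14_general {Ω : Type*} [MeasurableSpace Ω] (μ : Measure Ω) [IsProbabilityMeasure μ]
    (n : ℕ) (hn : 0 < n) (Z : Fin n → Ω → ℝ) (Z0 : Ω → ℝ) (l : ℝ) (hl : l < 0)
    (hindep : iIndepFun Z μ)
    (hid : ∀ i, IdentDistrib (Z i) Z0 μ μ)
    (hpos : ∀ᵐ ω ∂μ, 0 < Z0 ω)
    (hint : Integrable Z0 μ) :
    ∫ ω, (1 / l) * Real.log ((1 / (n : ℝ)) * ∑ i, Real.exp (l * Z i ω)) ∂μ ≤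
      (∫ ω, Z0 ω ∂μ) -
        (((n : ℝ) - 1) / (2 * n * |l|)) * variance (fun ω => Real.exp (l * Z0 ω)) μ := by
  have : Nonempty (Fin n) := ⟨⟨0, hn⟩⟩
  have hmean (f : Fin n → ℝ) : 1 / (n : ℝ) * ∑ i, f i = 𝔼 i, f i := by
    simp [Fintype.expect_eq_sum_div_card, div_eq_inv_mul]
  simp only [hmean, one_div_mul_eq_div]
  refine (integral_log_expect_exp_div_le hl (fun i j hij ↦ hindep.indepFun hij) hid
    (hpos.mono fun _ h ↦ h.le) hint).trans_eq ?_
  rw [Fintype.card_fin, abs_of_neg hl]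
  have := hl.ne
  field_simp
  ring

open MeasureTheory ProbabilityTheory in
theorem stmt_14 {Ω : Type*} [MeasurableSpace Ω] (μ : Measure Ω) [IsProbabilityMeasure μ]
    (n : ℕ) (hn : 0 < n) (Z : Fin n → Ω → ℝ) (Z0 : Ω → ℝ) (l : ℝ) (hl : l < 0)
    (hmeas : ∀ i, Measurable (Z i))
    (hindep : iIndepFun Z μ)
    (hid : ∀ i, IdentDistrib (Z i) Z0 μ μ)
    (hpos : ∀ᵐ ω ∂μ, 0 < Z0 ω)
    (hint : Integrable Z0 μ) :
    ∫ ω, (1 / l) * Real.log ((1 / (n : ℝ)) * ∑ i, Real.exp (l * Z i ω)) ∂μ ≤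
      (∫ ω, Z0 ω ∂μ) -
        (((n : ℝ) - 1) / (2 * n * |l|)) * variance (fun ω => Real.exp (l * Z0 ω)) μ :=
  stmt_14_general μ n hn Z Z0 l hl hindep hid hpos hint
end

section
/- For probability measures P₁, P₂ on a measurable space and a measurable function g with 0 < g ≤ 1 and λ < 0 such that g = e^{λ f} for a nonnegative function f, the difference of the log-partition functionals satisfies (1/λ) log E_{P₁}[e^{λ f}] − (1/λ) log E_{P₂}[e^{λ f}] ≤ TV(P₁,P₂)/(|λ| min(E_{P₁}[e^{λf}], E_{P₂}[e^{λf}])), where TV is the total variation distance. -/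
/-!
Put `Iᵢ = ∫ exp (l f) ∂Pᵢ > 0`. Since `log t ≤ t - 1`, the logarithm satisfies
`log x - log y ≤ |x - y| / min x y` on positive reals, so the left-hand side is at most
`|I₁ - I₂| / (|l| min I₁ I₂)`; and `exp (l f)` is itself a measurable function bounded by `1`,
so `|I₁ - I₂|` is one of the terms of the supremum.
-/

open MeasureTheory Real

lemma Real.log_sub_log_le_abs_sub_div_min {x y : ℝ} (hx : 0 < x) (hy : 0 < y) :
    log x - log y ≤ |x - y| / min x y := by
  rcases le_total y x with hyx | hxy
  · rw [min_eq_right hyx, abs_of_nonneg (sub_nonneg.2 hyx), ← log_div hx.ne' hy.ne']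
    calc log (x / y) ≤ x / y - 1 := log_le_sub_one_of_pos (div_pos hx hy)
      _ = (x - y) / y := by field_simp
  · calc log x - log y ≤ 0 := sub_nonpos.2 (log_le_log hx hxy)
      _ ≤ |x - y| / min x y := div_nonneg (abs_nonneg _) (le_min hx.le hy.le)

lemma Real.one_div_mul_log_sub_le {l x y : ℝ} (hl : l < 0) (hx : 0 < x) (hy : 0 < y) :
    1 / l * log x - 1 / l * log y ≤ |x - y| / (|l| * min x y) := by
  have hlog := log_sub_log_le_abs_sub_div_min hy hx
  rw [abs_sub_comm, min_comm] at hlog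
  calc 1 / l * log x - 1 / l * log y = (log y - log x) / |l| := by
        rw [abs_of_neg hl]; field_simp; ring
    _ ≤ |x - y| / min x y / |l| := div_le_div_of_nonneg_right hlog (abs_nonneg l)
    _ = |x - y| / (|l| * min x y) := by rw [div_div, mul_comm]

section IntegralDifference

variable {α : Type*} [MeasurableSpace α] (μ ν : Measure α) [IsFiniteMeasure μ] [IsFiniteMeasure ν]

lemma bddAbove_range_abs_integral_sub :
    BddAbove (Set.range fun g : {g : α → ℝ // Measurable g ∧ ∀ x, |g x| ≤ 1} =>
      |(∫ x, g.1 x ∂μ) - ∫ x, g.1 x ∂ν|) := by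
  refine ⟨μ.real Set.univ + ν.real Set.univ, ?_⟩
  rintro _ ⟨⟨g, -, hg1⟩, rfl⟩
  have hbound (ρ : Measure α) [IsFiniteMeasure ρ] : |∫ x, g x ∂ρ| ≤ ρ.real Set.univ := by
    simpa using norm_integral_le_of_norm_le_const (μ := ρ)
      (ae_of_all _ fun x => (norm_eq_abs (g x)).trans_le (hg1 x))
  calc |(∫ x, g x ∂μ) - ∫ x, g x ∂ν| ≤ |∫ x, g x ∂μ| + |∫ x, g x ∂ν| := abs_sub _ _
    _ ≤ μ.real Set.univ + ν.real Set.univ := add_le_add (hbound μ) (hbound ν)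

lemma abs_integral_sub_le_iSup {g : α → ℝ} (hg : Measurable g) (hg1 : ∀ x, |g x| ≤ 1) :
    |(∫ x, g x ∂μ) - ∫ x, g x ∂ν| ≤
      ⨆ g : {g : α → ℝ // Measurable g ∧ ∀ x, |g x| ≤ 1},
        |(∫ x, g.1 x ∂μ) - ∫ x, g.1 x ∂ν| :=
  le_ciSup (bddAbove_range_abs_integral_sub μ ν) ⟨g, hg, hg1⟩

end IntegralDifference

open MeasureTheory in
theorem stmt_16 {α : Type*} [MeasurableSpace α] (P₁ P₂ : Measure α)
    [IsProbabilityMeasure P₁] [IsProbabilityMeasure P₂]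
    (f : α → ℝ) (hf : Measurable f) (hf0 : ∀ x, 0 ≤ f x) (l : ℝ) (hl : l < 0) :
    (1 / l) * Real.log (∫ x, Real.exp (l * f x) ∂P₁) -
      (1 / l) * Real.log (∫ x, Real.exp (l * f x) ∂P₂) ≤
    (⨆ g : {g : α → ℝ // Measurable g ∧ ∀ x, |g x| ≤ 1},
        |(∫ x, g.1 x ∂P₁) - ∫ x, g.1 x ∂P₂|) /
      (|l| * min (∫ x, Real.exp (l * f x) ∂P₁) (∫ x, Real.exp (l * f x) ∂P₂)) := by
  have hg : Measurable fun x => exp (l * f x) := (hf.const_mul l).exp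
  have hg1 : ∀ x, |exp (l * f x)| ≤ 1 := fun x => by
    rw [abs_of_pos (exp_pos _), exp_le_one_iff]
    exact mul_nonpos_of_nonpos_of_nonneg hl.le (hf0 x)
  have hpos : ∀ (P : Measure α) [IsProbabilityMeasure P], 0 < ∫ x, exp (l * f x) ∂P :=
    fun _ _ => integral_exp_pos <| Integrable.of_bound hg.aestronglyMeasurable 1 <|
      ae_of_all _ fun x => (norm_eq_abs _).trans_le (hg1 x)
  calc _ ≤ |(∫ x, exp (l * f x) ∂P₁) - ∫ x, exp (l * f x) ∂P₂| /
        (|l| * min (∫ x, exp (l * f x) ∂P₁) (∫ x, exp (l * f x) ∂P₂)) :=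
        one_div_mul_log_sub_le hl (hpos P₁) (hpos P₂)
    _ ≤ _ := div_le_div_of_nonneg_right (abs_integral_sub_le_iSup P₁ P₂ hg hg1)
        (mul_nonneg (abs_nonneg l) (le_min (hpos P₁).le (hpos P₂).le))
end
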